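/- Let h(λ, μ, φ, ad_h*) be a Lie algebra on h ⊕ a ⊕ h* constructed as an abelian extension (bracket [x,y] = [x,y]_h + λ(x,y) + μ(x,y), [x, u+α] = φ(x)(u) + ad_h*(x)(α), zero bracket on a ⊕ h*), such that μ(x,y)(z) = μ(y,z)(x) for all x, y, z in h. Let B_a be a non-degenerate symmetric bilinear form on a and let λ_φ : h × h → a be the bilinear map determined by φ(x)(u)(y) = −B_a(λ_φ(x,y), u). Suppose there exists a linear map L : h → a such that: (i) λ_φ(x,y) = λ(x,y) − L([x,y]_h) for all x, y in h; and (ii) B_a(λ_φ(y,z), L(x)) = B_a(λ_φ(x,y), L(z)) for all x, y, z in h. Then the Lie algebra h(λ, μ, φ, ad_h*) admits an invariant metric, i.e. a non-degenerate symmetric bilinear form B with B([X,Y],Z) = −B(Y,[X,Z]) for all X, Y, Z. -/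

import Mathlib

/-!
Write `X = (x, u, α)` for elements of `h ⊕ a ⊕ h*`. The hyperbolic form
`B₀(X, Y) = α(y) + β(x) + B_a(u, v)` is invariant for any such bracket whose `a`-part is the
`B_a`-dual of `φ`, is skew, and whose `h*`-part `μ` is skew in its last two arguments.
The shear `(x, u, α) ↦ (x, u - L x, α)` is an isomorphism onto the bracket with `λ` replaced
by `λ_φ = λ - L ∘ [·,·]` and `μ` by `μ(x, y) + φ(x)(L y) - φ(y)(L x)`; hypothesis (ii) together
with cyclicity of `μ` is exactly the skewness of the latter. Hence `B₀` pulled back along the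
shear, `α(y) + β(x) + B_a(u - L x, v - L y)`, is an invariant metric.
-/

namespace AbelianExtension

open LinearMap (BilinForm)

variable {F h a : Type*} [Field F] [LieRing h] [LieAlgebra F h] [AddCommGroup a] [Module F a]

def IsInvariant {M : Type*} [AddCommGroup M] [Module F M] (B : BilinForm F M)
    (br : M → M → M) : Prop :=
  ∀ X Y Z, B (br X Y) Z = -B Y (br X Z)

theorem IsInvariant.congr {M N : Type*} [AddCommGroup M] [Module F M] [AddCommGroup N]
    [Module F N] {B : BilinForm F N} {br' : N → N → N} (hB : IsInvariant B br')
    (e : M ≃ₗ[F] N) {br : M → M → M} (he : ∀ X Y, e (br X Y) = br' (e X) (e Y)) :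
    IsInvariant (LinearMap.BilinForm.congr e.symm B) br := by
  intro X Y Z
  simp only [LinearMap.BilinForm.congr_apply, LinearEquiv.symm_symm, he]
  exact hB _ _ _

variable (F h) in
def coad (x : h) (ξ : Module.Dual F h) : Module.Dual F h :=
  -(ξ ∘ₗ LieAlgebra.ad F h x)

def bracket (la : h →ₗ[F] h →ₗ[F] a) (mu : h → h → Module.Dual F h)
    (φ : h →ₗ[F] a →ₗ[F] Module.Dual F h) (p q : h × a × Module.Dual F h) :
    h × a × Module.Dual F h :=
  (⁅p.1, q.1⁆, la p.1 q.1,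
    mu p.1 q.1 + φ p.1 q.2.1 - φ q.1 p.2.1 + coad F h p.1 q.2.2 - coad F h q.1 p.2.2)

def pairing (Ba : a →ₗ[F] a →ₗ[F] F) : BilinForm F (h × a × Module.Dual F h) :=
  LinearMap.mk₂ F (fun X Y => X.2.2 Y.1 + Y.2.2 X.1 + Ba X.2.1 Y.2.1)
    (fun X X' Y => by simp only [Prod.fst_add, Prod.snd_add, map_add, LinearMap.add_apply]; ring)
    (fun c X Y => by
      simp only [Prod.smul_fst, Prod.smul_snd, map_smul, LinearMap.smul_apply, smul_eq_mul]
      ring)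
    (fun X Y Y' => by simp only [Prod.fst_add, Prod.snd_add, map_add, LinearMap.add_apply]; ring)
    (fun c X Y => by
      simp only [Prod.smul_fst, Prod.smul_snd, map_smul, LinearMap.smul_apply, smul_eq_mul]
      ring)

@[simp]
theorem pairing_apply (Ba : a →ₗ[F] a →ₗ[F] F) (X Y : h × a × Module.Dual F h) :
    pairing Ba X Y = X.2.2 Y.1 + Y.2.2 X.1 + Ba X.2.1 Y.2.1 :=
  rfl

theorem pairing_isSymm {Ba : a →ₗ[F] a →ₗ[F] F} (hBa : ∀ u v, Ba u v = Ba v u) :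
    (pairing Ba : BilinForm F (h × a × Module.Dual F h)).IsSymm :=
  ⟨fun X Y => by rw [pairing_apply, pairing_apply, hBa]; ring⟩

theorem pairing_separatingLeft {Ba : a →ₗ[F] a →ₗ[F] F} (hBa : Ba.SeparatingLeft) :
    (pairing Ba : BilinForm F (h × a × Module.Dual F h)).SeparatingLeft := by
  rintro ⟨x, u, α⟩ hX
  have hx : x = 0 :=
    (Module.forall_dual_apply_eq_zero_iff F x).1 fun ξ => by simpa using hX (0, 0, ξ)
  have hu : u = 0 := hBa u fun v => by simpa [hx] using hX (0, v, 0)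
  have hα : α = 0 := LinearMap.ext fun y => by simpa [hx, hu] using hX (y, 0, 0)
  simp [hx, hu, hα]

theorem pairing_isInvariant {Ba : a →ₗ[F] a →ₗ[F] F} (hBa : ∀ u v, Ba u v = Ba v u)
    {la : h →ₗ[F] h →ₗ[F] a} {mu : h → h → Module.Dual F h}
    {φ : h →ₗ[F] a →ₗ[F] Module.Dual F h}
    (hφ : ∀ x y u, φ x u y = -Ba (la x y) u) (hla : ∀ x y, la x y = -la y x)
    (hmu : ∀ x y z, mu x y z = -mu x z y) :
    IsInvariant (pairing Ba) (bracket la mu φ) := by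
  rintro ⟨x, u, α⟩ ⟨y, v, β⟩ ⟨z, w, ζ⟩
  simp only [pairing_apply, bracket, coad, LinearMap.add_apply, LinearMap.sub_apply,
    LinearMap.neg_apply, LinearMap.comp_apply, LieAlgebra.ad_apply, hφ, hBa v, hla z y,
    map_neg, hmu x z y, ← lie_skew y z]
  ring

def shear (L : h →ₗ[F] a) : (h × a × Module.Dual F h) ≃ₗ[F] (h × a × Module.Dual F h) where
  toFun X := (X.1, X.2.1 - L X.1, X.2.2)
  invFun X := (X.1, X.2.1 + L X.1, X.2.2)
  map_add' X Y := by simp only [Prod.fst_add, Prod.snd_add, map_add, Prod.mk_add_mk]; abel_nf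
  map_smul' c X := by simp [smul_sub]
  left_inv X := by simp
  right_inv X := by simp

theorem shear_bracket {la la' : h →ₗ[F] h →ₗ[F] a} {L : h →ₗ[F] a}
    (hla' : ∀ x y, la' x y = la x y - L ⁅x, y⁆) (mu : h → h → Module.Dual F h)
    (φ : h →ₗ[F] a →ₗ[F] Module.Dual F h) (X Y : h × a × Module.Dual F h) :
    shear L (bracket la mu φ X Y) =
      bracket la' (fun x y => mu x y + φ x (L y) - φ y (L x)) φ (shear L X) (shear L Y) := by
  simp only [shear, bracket, LinearEquiv.coe_mk, LinearMap.coe_mk, AddHom.coe_mk, hla',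
    map_sub]
  abel_nf

end AbelianExtension

open AbelianExtension in
theorem stmt13_general (F : Type*) [Field F]
    (h : Type*) [LieRing h] [LieAlgebra F h]
    (a : Type*) [AddCommGroup a] [Module F a]
    (Ba : a →ₗ[F] a →ₗ[F] F)
    (hBasym : ∀ u v : a, Ba u v = Ba v u)
    (hBand : ∀ u : a, (∀ v : a, Ba u v = 0) → u = 0)
    (φ : h →ₗ[F] a →ₗ[F] Module.Dual F h)
    (la : h →ₗ[F] h →ₗ[F] a) (hla : ∀ x y : h, la x y = - la y x)
    (mu : h →ₗ[F] h →ₗ[F] Module.Dual F h) (hmu : ∀ x y : h, mu x y = - mu y x)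
    -- `μ` is cyclic
    (hmucyc : ∀ x y z : h, mu x y z = mu y z x)
    -- `λ_φ` is the bilinear map determined by `φ` and `B_a`
    (laφ : h →ₗ[F] h →ₗ[F] a)
    (hlaφ : ∀ (x y : h) (u : a), φ x u y = - Ba (laφ x y) u)
    -- the linear map `L` with (i) `λ_φ = λ + d_a(L)` and (ii) the `B_a`-compatibility
    (L : h →ₗ[F] a)
    (hL1 : ∀ x y : h, laφ x y = la x y - L ⁅x, y⁆)
    (hL2 : ∀ x y z : h, Ba (laφ y z) (L x) = Ba (laφ x y) (L z)) :
    -- the bracket of `h(λ, μ, φ, ad_h*)` on `h ⊕ a ⊕ h*`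
    let coad : h → Module.Dual F h → Module.Dual F h :=
      fun x ξ => - (ξ ∘ₗ LieAlgebra.ad F h x)
    let br : h × a × Module.Dual F h → h × a × Module.Dual F h →
        h × a × Module.Dual F h :=
      fun p q => (⁅p.1, q.1⁆, la p.1 q.1,
        mu p.1 q.1 + φ p.1 q.2.1 - φ q.1 p.2.1 + coad p.1 q.2.2 - coad q.1 p.2.2)
    -- there exists an invariant metric
    ∃ Bm : (h × a × Module.Dual F h) →ₗ[F] (h × a × Module.Dual F h) →ₗ[F] F,
      (∀ X Y : h × a × Module.Dual F h, Bm X Y = Bm Y X) ∧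
      (∀ X : h × a × Module.Dual F h, (∀ Y, Bm X Y = 0) → X = 0) ∧
      (∀ X Y Z : h × a × Module.Dual F h, Bm (br X Y) Z = - Bm Y (br X Z)) := by
  intro coad br
  have hlaφ_skew : ∀ x y, laφ x y = -laφ y x := fun x y => by
    rw [hL1, hL1, hla y x, ← lie_skew x y, map_neg]
    abel
  have hmu_skew : ∀ x y z, mu x y z = -mu x z y := fun x y z => by
    rw [hmucyc x y z, hmucyc x z y, hmu z y, LinearMap.neg_apply, neg_neg]
  have htwist_skew : ∀ x y z, (mu x y + φ x (L y) - φ y (L x)) z =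
      -(mu x z + φ x (L z) - φ z (L x)) y := fun x y z => by
    simp only [LinearMap.add_apply, LinearMap.sub_apply, hlaφ, hmu_skew x y z, hlaφ_skew z y,
      map_neg, LinearMap.neg_apply]
    have hL2' := hL2 y x z
    rw [hlaφ_skew y x, map_neg, LinearMap.neg_apply] at hL2'
    linear_combination -hL2'
  have hinv := (pairing_isInvariant hBasym hlaφ hlaφ_skew htwist_skew).congr (shear L)
    (shear_bracket hL1 (fun x y => mu x y) φ)
  exact ⟨LinearMap.BilinForm.congr (shear L).symm (pairing Ba),
    fun X Y => (pairing_isSymm hBasym).eq _ _,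
    (pairing_separatingLeft hBand).congr _ _, hinv⟩

/-- if `μ` is cyclic and there is a linear map `L : h → a` with
`λ_φ = λ + d_a(L)` and `B_a(λ_φ(y,z), L(x)) = B_a(λ_φ(x,y), L(z))`, then
`h(λ, μ, φ, ad_h*)` admits an invariant metric. -/
theorem stmt13 (F : Type*) [Field F] [CharZero F]
    (h : Type*) [LieRing h] [LieAlgebra F h] [FiniteDimensional F h]
    (a : Type*) [AddCommGroup a] [Module F a] [FiniteDimensional F a]
    (Ba : a →ₗ[F] a →ₗ[F] F)
    (hBasym : ∀ u v : a, Ba u v = Ba v u)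
    (hBand : ∀ u : a, (∀ v : a, Ba u v = 0) → u = 0)
    (φ : h →ₗ[F] a →ₗ[F] Module.Dual F h)
    (hφ : ∀ (x y : h) (u : a) (z : h),
      φ ⁅x, y⁆ u z = - φ y u ⁅x, z⁆ + φ x u ⁅y, z⁆)
    (la : h →ₗ[F] h →ₗ[F] a) (hla : ∀ x y : h, la x y = - la y x)
    (mu : h →ₗ[F] h →ₗ[F] Module.Dual F h) (hmu : ∀ x y : h, mu x y = - mu y x)
    (hcoc1 : ∀ x y z : h, la ⁅x, y⁆ z + la ⁅y, z⁆ x + la ⁅z, x⁆ y = 0)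
    (hcoc2 : ∀ x y z w : h,
      φ x (la y z) w - φ y (la x z) w + φ z (la x y) w
        - mu y z ⁅x, w⁆ + mu x z ⁅y, w⁆ - mu x y ⁅z, w⁆
        - mu ⁅x, y⁆ z w + mu ⁅x, z⁆ y w - mu ⁅y, z⁆ x w = 0)
    -- `μ` is cyclic
    (hmucyc : ∀ x y z : h, mu x y z = mu y z x)
    -- `λ_φ` is the bilinear map determined by `φ` and `B_a`
    (laφ : h →ₗ[F] h →ₗ[F] a)
    (hlaφ : ∀ (x y : h) (u : a), φ x u y = - Ba (laφ x y) u)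
    -- the linear map `L` with (i) `λ_φ = λ + d_a(L)` and (ii) the `B_a`-compatibility
    (L : h →ₗ[F] a)
    (hL1 : ∀ x y : h, laφ x y = la x y - L ⁅x, y⁆)
    (hL2 : ∀ x y z : h, Ba (laφ y z) (L x) = Ba (laφ x y) (L z)) :
    -- the bracket of `h(λ, μ, φ, ad_h*)` on `h ⊕ a ⊕ h*`
    let coad : h → Module.Dual F h → Module.Dual F h :=
      fun x ξ => - (ξ ∘ₗ LieAlgebra.ad F h x)
    let br : h × a × Module.Dual F h → h × a × Module.Dual F h →
        h × a × Module.Dual F h :=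
      fun p q => (⁅p.1, q.1⁆, la p.1 q.1,
        mu p.1 q.1 + φ p.1 q.2.1 - φ q.1 p.2.1 + coad p.1 q.2.2 - coad q.1 p.2.2)
    -- there exists an invariant metric
    ∃ Bm : (h × a × Module.Dual F h) →ₗ[F] (h × a × Module.Dual F h) →ₗ[F] F,
      (∀ X Y : h × a × Module.Dual F h, Bm X Y = Bm Y X) ∧
      (∀ X : h × a × Module.Dual F h, (∀ Y, Bm X Y = 0) → X = 0) ∧
      (∀ X Y Z : h × a × Module.Dual F h, Bm (br X Y) Z = - Bm Y (br X Z)) :=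
  stmt13_general F h a Ba hBasym hBand φ la hla mu hmu hmucyc laφ hlaφ L hL1 hL2
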